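/- (Theorem 1, gyrotranslation part, gyrometric form.) For every c > 0 and all u, x, y ∈ E with c·‖u‖² < 1, c·‖x‖² < 1, c·‖y‖² < 1, one has ‖(−(u ⊕_c x)) ⊕_c (u ⊕_c y)‖ = ‖(−x) ⊕_c y‖. -/

import Mathlib

/-!
Writing `D(x, y) = 1 + 2c⟪x, y⟫ + c²‖x‖²‖y‖²` for the denominator of Möbius addition, one has
`‖x ⊕ y‖² = ‖x + y‖² / D(x, y)` and `D(x, y) = (1 - c‖x‖²)(1 - c‖y‖²) + c‖x + y‖²`. Hence the
gyrodistance `‖(-x) ⊕ y‖²` is a function of `‖y - x‖²` and `(1 - c‖x‖²)(1 - c‖y‖²)` that does not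
change when both are multiplied by the same nonzero factor. Left translation by `u` multiplies both by
`(1 - c‖u‖²)² / (D(u, x) D(u, y))`.
-/

open scoped RealInnerProductSpace

variable {E : Type*} [NormedAddCommGroup E] [InnerProductSpace ℝ E] [FiniteDimensional ℝ E]

/-- Möbius addition on the Poincaré ball of curvature `-c`. -/
noncomputable def mobiusAdd (c : ℝ) (x y : E) : E :=
  (1 / (1 + 2 * c * ⟪x, y⟫ + c ^ 2 * ‖x‖ ^ 2 * ‖y‖ ^ 2)) •
    ((1 + 2 * c * ⟪x, y⟫ + c * ‖y‖ ^ 2) • x + (1 - c * ‖x‖ ^ 2) • y)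

section

variable {V : Type*} [NormedAddCommGroup V] [InnerProductSpace ℝ V] (c : ℝ)

theorem mobiusAdd_denom_eq (x y : V) :
    1 + 2 * c * ⟪x, y⟫ + c ^ 2 * ‖x‖ ^ 2 * ‖y‖ ^ 2
      = (1 - c * ‖x‖ ^ 2) * (1 - c * ‖y‖ ^ 2) + c * ‖x + y‖ ^ 2 := by
  rw [norm_add_sq_real]
  ring

variable {c} in
theorem mobiusAdd_denom_pos (hc : 0 ≤ c) {x y : V} (hx : c * ‖x‖ ^ 2 < 1)
    (hy : c * ‖y‖ ^ 2 < 1) : 0 < 1 + 2 * c * ⟪x, y⟫ + c ^ 2 * ‖x‖ ^ 2 * ‖y‖ ^ 2 := by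
  rw [mobiusAdd_denom_eq]
  have := mul_pos (sub_pos.2 hx) (sub_pos.2 hy)
  positivity

/-- This holds even where the denominator vanishes, both sides being `0` there. -/
theorem norm_sq_mobiusAdd (x y : V) :
    ‖mobiusAdd c x y‖ ^ 2 = ‖x + y‖ ^ 2 / (1 + 2 * c * ⟪x, y⟫ + c ^ 2 * ‖x‖ ^ 2 * ‖y‖ ^ 2) := by
  by_cases hD : 1 + 2 * c * ⟪x, y⟫ + c ^ 2 * ‖x‖ ^ 2 * ‖y‖ ^ 2 = 0
  · simp [mobiusAdd, hD]
  rw [mobiusAdd, norm_smul, mul_pow, norm_add_sq_real, norm_add_sq_real, norm_smul, norm_smul,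
    real_inner_smul_left, real_inner_smul_right]
  simp only [Real.norm_eq_abs, mul_pow, sq_abs]
  field_simp
  ring

theorem norm_sq_mobiusAdd_neg (x y : V) :
    ‖mobiusAdd c (-x) y‖ ^ 2
      = ‖y - x‖ ^ 2 / ((1 - c * ‖x‖ ^ 2) * (1 - c * ‖y‖ ^ 2) + c * ‖y - x‖ ^ 2) := by
  rw [norm_sq_mobiusAdd, mobiusAdd_denom_eq, norm_neg, neg_add_eq_sub]

theorem one_sub_mul_norm_sq_mobiusAdd {x y : V}
    (hD : 1 + 2 * c * ⟪x, y⟫ + c ^ 2 * ‖x‖ ^ 2 * ‖y‖ ^ 2 ≠ 0) :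
    1 - c * ‖mobiusAdd c x y‖ ^ 2
      = (1 - c * ‖x‖ ^ 2) * (1 - c * ‖y‖ ^ 2) / (1 + 2 * c * ⟪x, y⟫ + c ^ 2 * ‖x‖ ^ 2 * ‖y‖ ^ 2) := by
  rw [mobiusAdd_denom_eq] at hD
  rw [norm_sq_mobiusAdd, mobiusAdd_denom_eq]
  field_simp
  ring

theorem norm_sq_mobiusAdd_sub_mobiusAdd {u x y : V}
    (hx : 1 + 2 * c * ⟪u, x⟫ + c ^ 2 * ‖u‖ ^ 2 * ‖x‖ ^ 2 ≠ 0)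
    (hy : 1 + 2 * c * ⟪u, y⟫ + c ^ 2 * ‖u‖ ^ 2 * ‖y‖ ^ 2 ≠ 0) :
    ‖mobiusAdd c u x - mobiusAdd c u y‖ ^ 2
      = (1 - c * ‖u‖ ^ 2) ^ 2 * ‖x - y‖ ^ 2
        / ((1 + 2 * c * ⟪u, x⟫ + c ^ 2 * ‖u‖ ^ 2 * ‖x‖ ^ 2)
          * (1 + 2 * c * ⟪u, y⟫ + c ^ 2 * ‖u‖ ^ 2 * ‖y‖ ^ 2)) := by
  rw [← real_inner_self_eq_norm_sq (mobiusAdd c u x - mobiusAdd c u y), norm_sub_sq_real]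
  simp only [mobiusAdd, inner_sub_left, inner_sub_right, inner_add_left, inner_add_right,
    real_inner_smul_left, real_inner_smul_right, real_inner_comm u x, real_inner_comm u y,
    real_inner_comm x y]
  simp only [real_inner_self_eq_norm_sq]
  field_simp
  ring

theorem norm_mobiusAdd_neg_eq_of_scale {a b x y : V} {t : ℝ} (ht : t ≠ 0)
    (hdist : ‖b - a‖ ^ 2 = t * ‖y - x‖ ^ 2)
    (hconf : (1 - c * ‖a‖ ^ 2) * (1 - c * ‖b‖ ^ 2) = t * ((1 - c * ‖x‖ ^ 2) * (1 - c * ‖y‖ ^ 2))) :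
    ‖mobiusAdd c (-a) b‖ = ‖mobiusAdd c (-x) y‖ := by
  rw [← sq_eq_sq₀ (norm_nonneg _) (norm_nonneg _), norm_sq_mobiusAdd_neg, norm_sq_mobiusAdd_neg,
    hdist, hconf, mul_left_comm c t, ← mul_add, mul_div_mul_left _ _ ht]

end

theorem gyrotranslation_gyrometric (c : ℝ) (hc : 0 < c) (u x y : E)
    (hu : c * ‖u‖ ^ 2 < 1) (hx : c * ‖x‖ ^ 2 < 1) (hy : c * ‖y‖ ^ 2 < 1) :
    ‖mobiusAdd c (-(mobiusAdd c u x)) (mobiusAdd c u y)‖ = ‖mobiusAdd c (-x) y‖ := by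
  have hDx := (mobiusAdd_denom_pos hc.le hu hx).ne'
  have hDy := (mobiusAdd_denom_pos hc.le hu hy).ne'
  have hscale : (1 - c * ‖u‖ ^ 2) ^ 2 / ((1 + 2 * c * ⟪u, x⟫ + c ^ 2 * ‖u‖ ^ 2 * ‖x‖ ^ 2)
      * (1 + 2 * c * ⟪u, y⟫ + c ^ 2 * ‖u‖ ^ 2 * ‖y‖ ^ 2)) ≠ 0 :=
    div_ne_zero (pow_ne_zero 2 (sub_pos.2 hu).ne') (mul_ne_zero hDx hDy)
  refine norm_mobiusAdd_neg_eq_of_scale c hscale ?_ ?_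
  · rw [norm_sq_mobiusAdd_sub_mobiusAdd c hDy hDx]
    ring
  · rw [one_sub_mul_norm_sq_mobiusAdd c hDx, one_sub_mul_norm_sq_mobiusAdd c hDy]
    rw [div_mul_div_comm, div_mul_eq_mul_div]
    ring
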